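/- Let Φ ∈ ℂ[x0,x1,x2,y0,y1,y2,y3] be a joint semiinvariant under translations of the binary quadratic f(u) = x0·u² + x1·u + x2 and the binary cubic g(u) = y0·u³ + y1·u² + y2·u + y3, i.e. suppose that for every κ ∈ ℂ and all complex values of the variables, Φ(x0, x1 + 2κx0, x2 + κx1 + κ²x0, y0, y1 + 3κy0, y2 + 2κy1 + 3κ²y0, y3 + κy2 + κ²y1 + κ³y0) = Φ(x0, x1, x2, y0, y1, y2, y3) (the arguments on the left are the coefficients of f(u+κ) and g(u+κ)). Then for every τ ∈ ℍ with E4(τ)·E6(τ) ≠ 0 and every z ∈ ℂ⁴, Φ(a0, 0, a2, b0, b1, b2, b3) = Φ(c0, c1, c2, d0, 0, d2, d3), where all arguments are evaluated at (τ,z). -/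
import Mathlib


open MvPolynomial Complex

/-- `I2 = z1²+z2²+z3²+z4²` as a function on ℂ⁴ -/
noncomputable def fI2 (z : Fin 4 → ℂ) : ℂ := ∑ i, z i ^ 2

/-- `I4 = Σ_{i<j} zi²zj²` as a function on ℂ⁴ -/
noncomputable def fI4 (z : Fin 4 → ℂ) : ℂ :=
  ∑ p ∈ Finset.univ.filter (fun p : Fin 4 × Fin 4 => p.1 < p.2), z p.1 ^ 2 * z p.2 ^ 2

/-- `I6 = Σ_{i<j<k} zi²zj²zk²` as a function on ℂ⁴ -/
noncomputable def fI6 (z : Fin 4 → ℂ) : ℂ :=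
  ∑ p ∈ Finset.univ.filter (fun p : Fin 4 × Fin 4 × Fin 4 => p.1 < p.2.1 ∧ p.2.1 < p.2.2),
    z p.1 ^ 2 * z p.2.1 ^ 2 * z p.2.2 ^ 2

/-- `Ĩ4 = z1z2z3z4` as a function on ℂ⁴ -/
noncomputable def fI4t (z : Fin 4 → ℂ) : ℂ := ∏ i, z i

/-- `T1 = I4/6 − I2²/24` -/
noncomputable def fT1 (z : Fin 4 → ℂ) : ℂ := fI4 z / 6 - fI2 z ^ 2 / 24

/-- `T2 = −I4/12 − Ĩ4/2 + I2²/48` -/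
noncomputable def fT2 (z : Fin 4 → ℂ) : ℂ := -fI4 z / 12 - fI4t z / 2 + fI2 z ^ 2 / 48

/-- `T3 = −I4/12 + Ĩ4/2 + I2²/48` -/
noncomputable def fT3 (z : Fin 4 → ℂ) : ℂ := -fI4 z / 12 + fI4t z / 2 + fI2 z ^ 2 / 48

/-- `θ2(τ) = Σ_{n∈ℤ} q^{(n−1/2)²/2}`, `q = e^{2πiτ}` -/
noncomputable def theta2 (τ : ℂ) : ℂ :=
  ∑' n : ℤ, Complex.exp (Real.pi * Complex.I * τ * ((n : ℂ) - 1 / 2) ^ 2)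

/-- `θ3(τ) = Σ_{n∈ℤ} q^{n²/2}` -/
noncomputable def theta3 (τ : ℂ) : ℂ :=
  ∑' n : ℤ, Complex.exp (Real.pi * Complex.I * τ * (n : ℂ) ^ 2)

/-- `θ4(τ) = Σ_{n∈ℤ} (−1)ⁿ q^{n²/2}` -/
noncomputable def theta4 (τ : ℂ) : ℂ :=
  ∑' n : ℤ, (-1 : ℂ) ^ n * Complex.exp (Real.pi * Complex.I * τ * (n : ℂ) ^ 2)

/-- `e1 = (θ3⁴+θ4⁴)/12` -/
noncomputable def e1 (τ : ℂ) : ℂ := (theta3 τ ^ 4 + theta4 τ ^ 4) / 12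

/-- `e2 = (θ2⁴−θ4⁴)/12` -/
noncomputable def e2 (τ : ℂ) : ℂ := (theta2 τ ^ 4 - theta4 τ ^ 4) / 12

/-- `e3 = (−θ2⁴−θ3⁴)/12` -/
noncomputable def e3 (τ : ℂ) : ℂ := (-theta2 τ ^ 4 - theta3 τ ^ 4) / 12

/-- `K = I2` -/
noncomputable def Kf (_τ : ℂ) (z : Fin 4 → ℂ) : ℂ := fI2 z

/-- `L = e1·T1 + e2·T2 + e3·T3` -/
noncomputable def Lf (τ : ℂ) (z : Fin 4 → ℂ) : ℂ :=
  e1 τ * fT1 z + e2 τ * fT2 z + e3 τ * fT3 z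

/-- `M = 12(e1²·T1 + e2²·T2 + e3²·T3)` -/
noncomputable def Mf (τ : ℂ) (z : Fin 4 → ℂ) : ℂ :=
  12 * (e1 τ ^ 2 * fT1 z + e2 τ ^ 2 * fT2 z + e3 τ ^ 2 * fT3 z)

/-- `N = I6/4 − I2·I4/24 + I2³/96` -/
noncomputable def Nf (_τ : ℂ) (z : Fin 4 → ℂ) : ℂ :=
  fI6 z / 4 - fI2 z * fI4 z / 24 + fI2 z ^ 3 / 96

/-- `q = e^{2πiτ}` -/
noncomputable def qc (τ : ℂ) : ℂ := Complex.exp (2 * Real.pi * Complex.I * τ)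

/-- `E4(τ) = 1 + 240·Σ_{n≥1} n³qⁿ/(1−qⁿ)` -/
noncomputable def E4 (τ : ℂ) : ℂ :=
  1 + 240 * ∑' n : ℕ, ((n : ℂ) + 1) ^ 3 * qc τ ^ (n + 1) / (1 - qc τ ^ (n + 1))

/-- `E6(τ) = 1 − 504·Σ_{n≥1} n⁵qⁿ/(1−qⁿ)` -/
noncomputable def E6 (τ : ℂ) : ℂ :=
  1 - 504 * ∑' n : ℕ, ((n : ℂ) + 1) ^ 5 * qc τ ^ (n + 1) / (1 - qc τ ^ (n + 1))

/-- `Δ = (E4³ − E6²)/1728` -/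
noncomputable def Δf (τ : ℂ) : ℂ := (E4 τ ^ 3 - E6 τ ^ 2) / 1728

/-- `a0 = E4/12` -/
noncomputable def a0f (τ : ℂ) : ℂ := E4 τ / 12

/-- `a2 = ΔK²/(4E4) − E6·L/24 + E4·M/24` -/
noncomputable def a2f (τ : ℂ) (z : Fin 4 → ℂ) : ℂ :=
  Δf τ * Kf τ z ^ 2 / (4 * E4 τ) - E6 τ * Lf τ z / 24 + E4 τ * Mf τ z / 24

/-- `b0 = E6/216` -/
noncomputable def b0f (τ : ℂ) : ℂ := E6 τ / 216

/-- `b1 = ΔK/E4` -/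
noncomputable def b1f (τ : ℂ) (z : Fin 4 → ℂ) : ℂ := Δf τ * Kf τ z / E4 τ

/-- `b2 = −E6·ΔK²/(24E4²) − E4²·L/288 + E6·M/288` -/
noncomputable def b2f (τ : ℂ) (z : Fin 4 → ℂ) : ℂ :=
  -(E6 τ * Δf τ * Kf τ z ^ 2) / (24 * E4 τ ^ 2) - E4 τ ^ 2 * Lf τ z / 288 + E6 τ * Mf τ z / 288

/-- `b3 = −Δ²K³/E4³ + ΔK·M/(4E4) + Δ·N/4` -/
noncomputable def b3f (τ : ℂ) (z : Fin 4 → ℂ) : ℂ :=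
  -(Δf τ ^ 2 * Kf τ z ^ 3) / E4 τ ^ 3 + Δf τ * Kf τ z * Mf τ z / (4 * E4 τ) + Δf τ * Nf τ z / 4

/-- `c0 = E4/12` -/
noncomputable def c0f (τ : ℂ) : ℂ := E4 τ / 12

/-- `c1 = −12·ΔK/E6` -/
noncomputable def c1f (τ : ℂ) (z : Fin 4 → ℂ) : ℂ := -12 * Δf τ * Kf τ z / E6 τ

/-- `c2 = E4²·ΔK²/(4E6²) − E6·L/24 + E4·M/24` -/
noncomputable def c2f (τ : ℂ) (z : Fin 4 → ℂ) : ℂ :=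
  E4 τ ^ 2 * Δf τ * Kf τ z ^ 2 / (4 * E6 τ ^ 2) - E6 τ * Lf τ z / 24 + E4 τ * Mf τ z / 24

/-- `d0 = E6/216` -/
noncomputable def d0f (τ : ℂ) : ℂ := E6 τ / 216

/-- `d2 = −E4·ΔK²/(24E6) − E4²·L/288 + E6·M/288` -/
noncomputable def d2f (τ : ℂ) (z : Fin 4 → ℂ) : ℂ :=
  -(E4 τ * Δf τ * Kf τ z ^ 2) / (24 * E6 τ) - E4 τ ^ 2 * Lf τ z / 288 + E6 τ * Mf τ z / 288

/-- `d3 = 2Δ²K³/E6² + E4·ΔK·L/(4E6) + Δ·N/4` -/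
noncomputable def d3f (τ : ℂ) (z : Fin 4 → ℂ) : ℂ :=
  2 * Δf τ ^ 2 * Kf τ z ^ 3 / E6 τ ^ 2 + E4 τ * Δf τ * Kf τ z * Lf τ z / (4 * E6 τ) +
    Δf τ * Nf τ z / 4

set_option maxHeartbeats 1000000 in
/-- If `Φ ∈ ℂ[x0,x1,x2,y0,y1,y2,y3]` is invariant under the translation action
`u ↦ u + κ` on the coefficients of the binary quadratic and the binary cubic, then
`Φ(a0,0,a2,b0,b1,b2,b3) = Φ(c0,c1,c2,d0,0,d2,d3)` at every `(τ,z)` with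
`E4(τ)·E6(τ) ≠ 0`. -/
theorem stmt_14 (Φ : MvPolynomial (Fin 7) ℂ)
    (hΦ : ∀ κ : ℂ, ∀ x : Fin 7 → ℂ,
      MvPolynomial.eval
        (![x 0, x 1 + 2 * κ * x 0, x 2 + κ * x 1 + κ ^ 2 * x 0,
           x 3, x 4 + 3 * κ * x 3, x 5 + 2 * κ * x 4 + 3 * κ ^ 2 * x 3,
           x 6 + κ * x 5 + κ ^ 2 * x 4 + κ ^ 3 * x 3]) Φ
        = MvPolynomial.eval x Φ) :
    ∀ τ : ℂ, 0 < τ.im → E4 τ * E6 τ ≠ 0 → ∀ z : Fin 4 → ℂ,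
      MvPolynomial.eval
          (![a0f τ, 0, a2f τ z, b0f τ, b1f τ z, b2f τ z, b3f τ z]) Φ
        = MvPolynomial.eval
            (![c0f τ, c1f τ z, c2f τ z, d0f τ, 0, d2f τ z, d3f τ z]) Φ := by
  intro τ _ hne z
  have h4 : E4 τ ≠ 0 := left_ne_zero_of_mul hne
  have h6 : E6 τ ≠ 0 := right_ne_zero_of_mul hne
  have hA : E4 τ * (E4 τ)⁻¹ = 1 := mul_inv_cancel₀ h4
  have hB : E6 τ * (E6 τ)⁻¹ = 1 := mul_inv_cancel₀ h6
  set κ : ℂ := 72 * Δf τ * Kf τ z / (E4 τ * E6 τ) with hκ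
  have key : MvPolynomial.eval
      (![c0f τ, c1f τ z + 2 * κ * c0f τ, c2f τ z + κ * c1f τ z + κ ^ 2 * c0f τ,
        d0f τ, 0 + 3 * κ * d0f τ, d2f τ z + 2 * κ * 0 + 3 * κ ^ 2 * d0f τ,
        d3f τ z + κ * d2f τ z + κ ^ 2 * 0 + κ ^ 3 * d0f τ]) Φ
      = MvPolynomial.eval (![c0f τ, c1f τ z, c2f τ z, d0f τ, 0, d2f τ z, d3f τ z]) Φ :=
    hΦ κ ![c0f τ, c1f τ z, c2f τ z, d0f τ, 0, d2f τ z, d3f τ z]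
  rw [← key]
  have e1' : c1f τ z + 2 * κ * c0f τ = 0 := by
    rw [hκ]; simp only [c1f, c0f, Δf, div_eq_mul_inv, mul_inv, ← inv_pow]
    linear_combination ((-1/144 : ℂ) * (E6 τ)^2 * (E6 τ)⁻¹ * (Kf τ z) + (1/144 : ℂ) * (E4 τ)^3 * (E6 τ)⁻¹ * (Kf τ z)) * hA + (0 : ℂ) * hB
  have e2' : c2f τ z + κ * c1f τ z + κ ^ 2 * c0f τ = a2f τ z := by
    rw [hκ]; simp only [c2f, c1f, c0f, a2f, Δf, div_eq_mul_inv, mul_inv, ← inv_pow]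
    linear_combination ((1/6912 : ℂ) * (E6 τ)^4 * (E4 τ)⁻¹ * (E6 τ)⁻¹^2 * (Kf τ z)^2 + (-1/6912 : ℂ) * (E4 τ)^2 * (Kf τ z)^2 + (1/3456 : ℂ) * (E4 τ)^2 * (E6 τ)^2 * (E6 τ)⁻¹^2 * (Kf τ z)^2 + (-1/3456 : ℂ) * (E4 τ)^3 * (E6 τ)^2 * (E4 τ)⁻¹ * (E6 τ)⁻¹^2 * (Kf τ z)^2 + (-1/6912 : ℂ) * (E4 τ)^5 * (E6 τ)⁻¹^2 * (Kf τ z)^2 + (1/6912 : ℂ) * (E4 τ)^6 * (E4 τ)⁻¹ * (E6 τ)⁻¹^2 * (Kf τ z)^2) * hA + ((-1/6912 : ℂ) * (E6 τ)^2 * (E4 τ)⁻¹ * (Kf τ z)^2 + (-1/6912 : ℂ) * (E6 τ)^3 * (E4 τ)⁻¹ * (E6 τ)⁻¹ * (Kf τ z)^2 + (1/6912 : ℂ) * (E4 τ)^2 * (Kf τ z)^2 + (1/6912 : ℂ) * (E4 τ)^2 * (E6 τ) * (E6 τ)⁻¹ * (Kf τ z)^2) * hB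
  have e3' : d0f τ = b0f τ := rfl
  have e4' : 0 + 3 * κ * d0f τ = b1f τ z := by
    rw [hκ]; simp only [d0f, b1f, Δf, div_eq_mul_inv, mul_inv, ← inv_pow]
    linear_combination ((-1/1728 : ℂ) * (E4 τ)^2 * (Kf τ z) + (1/1728 : ℂ) * (E4 τ)^2 * (E6 τ) * (E6 τ)⁻¹ * (Kf τ z)) * hA + ((-1/1728 : ℂ) * (E6 τ)^2 * (E4 τ)⁻¹ * (Kf τ z) + (1/1728 : ℂ) * (E4 τ)^2 * (Kf τ z)) * hB
  have e5' : d2f τ z + 2 * κ * 0 + 3 * κ ^ 2 * d0f τ = b2f τ z := by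
    rw [hκ]; simp only [d2f, d0f, b2f, Δf, div_eq_mul_inv, mul_inv, ← inv_pow]
    linear_combination ((1/41472 : ℂ) * (E4 τ) * (E6 τ) * (Kf τ z)^2 + (-1/20736 : ℂ) * (E4 τ) * (E6 τ)^3 * (E6 τ)⁻¹^2 * (Kf τ z)^2 + (1/41472 : ℂ) * (E4 τ)^2 * (E6 τ) * (E4 τ)⁻¹ * (Kf τ z)^2 + (-1/20736 : ℂ) * (E4 τ)^2 * (E6 τ)^3 * (E4 τ)⁻¹ * (E6 τ)⁻¹^2 * (Kf τ z)^2 + (1/41472 : ℂ) * (E4 τ)^4 * (E6 τ) * (E6 τ)⁻¹^2 * (Kf τ z)^2 + (1/41472 : ℂ) * (E4 τ)^5 * (E6 τ) * (E4 τ)⁻¹ * (E6 τ)⁻¹^2 * (Kf τ z)^2) * hA + ((1/41472 : ℂ) * (E6 τ)^3 * (E4 τ)⁻¹^2 * (Kf τ z)^2 + (1/41472 : ℂ) * (E6 τ)^4 * (E4 τ)⁻¹^2 * (E6 τ)⁻¹ * (Kf τ z)^2 + (-1/41472 : ℂ) * (E4 τ) * (E6 τ) * (Kf τ z)^2 + (-1/20736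 : ℂ) * (E4 τ) * (E6 τ)^2 * (E6 τ)⁻¹ * (Kf τ z)^2 + (1/41472 : ℂ) * (E4 τ)^4 * (E6 τ)⁻¹ * (Kf τ z)^2) * hB
  have e6' : d3f τ z + κ * d2f τ z + κ ^ 2 * 0 + κ ^ 3 * d0f τ = b3f τ z := by
    rw [hκ]; simp only [d3f, d2f, d0f, b3f, Δf, div_eq_mul_inv, mul_inv, ← inv_pow]
    linear_combination ((-1/1492992 : ℂ) * (E6 τ)^2 * (Kf τ z)^3 + (-1/995328 : ℂ) * (E6 τ)^4 * (E6 τ)⁻¹^2 * (Kf τ z)^3 + (1/995328 : ℂ) * (E6 τ)^5 * (E6 τ)⁻¹^3 * (Kf τ z)^3 + (1/6912 : ℂ) * (E4 τ) * (E6 τ)^2 * (E6 τ)⁻¹ * (Kf τ z) * (Lf τ z) + (-1/1492992 : ℂ) * (E4 τ) * (E6 τ)^2 * (E4 τ)⁻¹ * (Kf τ z)^3 + (1/995328 : ℂ) * (E4 τ) * (E6 τ)^5 * (E4 τ)⁻¹ * (E6 τ)⁻¹^3 * (Kf τ z)^3 + (-1/6912 : ℂ) * (E4 τ)^2 * (Kf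 τ z) * (Mf τ z) + (1/6912 : ℂ) * (E4 τ)^2 * (E6 τ) * (E6 τ)⁻¹ * (Kf τ z) * (Mf τ z) + (-1/1492992 : ℂ) * (E4 τ)^2 * (E6 τ)^2 * (E4 τ)⁻¹^2 * (Kf τ z)^3 + (1/995328 : ℂ) * (E4 τ)^2 * (E6 τ)^5 * (E4 τ)⁻¹^2 * (E6 τ)⁻¹^3 * (Kf τ z)^3 + (1/2985984 : ℂ) * (E4 τ)^3 * (Kf τ z)^3 + (1/497664 : ℂ) * (E4 τ)^3 * (E6 τ)^2 * (E6 τ)⁻¹^2 * (Kf τ z)^3 + (-1/995328 : ℂ) * (E4 τ)^3 * (E6 τ)^3 * (E6 τ)⁻¹^3 * (Kf τ z)^3 + (-1/6912 : ℂ) * (E4 τ)^4 * (E6 τ)⁻¹ * (Kf τ z) * (Lf τ z) + (1/2985984 : ℂ) * (E4 τ)^4 * (E4 τ)⁻¹ * (Kf τ z)^3 + (-1/995328 : ℂ) * (E4 τ)^4 * (E6 τ)^3 * (E4 τ)⁻¹ * (E6 τ)⁻¹^3 * (Kf τ z)^3 + (1/2985984 : ℂ) * (E4 τ)^5 * (E4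 τ)⁻¹^2 * (Kf τ z)^3 + (-1/995328 : ℂ) * (E4 τ)^5 * (E6 τ)^3 * (E4 τ)⁻¹^2 * (E6 τ)⁻¹^3 * (Kf τ z)^3 + (-1/995328 : ℂ) * (E4 τ)^6 * (E6 τ)⁻¹^2 * (Kf τ z)^3 + (1/2985984 : ℂ) * (E4 τ)^6 * (E6 τ) * (E6 τ)⁻¹^3 * (Kf τ z)^3 + (1/2985984 : ℂ) * (E4 τ)^7 * (E6 τ) * (E4 τ)⁻¹ * (E6 τ)⁻¹^3 * (Kf τ z)^3 + (1/2985984 : ℂ) * (E4 τ)^8 * (E6 τ) * (E4 τ)⁻¹^2 * (E6 τ)⁻¹^3 * (Kf τ z)^3) * hA + ((1/1492992 : ℂ) * (E6 τ)^2 * (Kf τ z)^3 + (-1/6912 : ℂ) * (E6 τ)^2 * (E4 τ)⁻¹ * (Kf τ z) * (Mf τ z) + (1/1492992 : ℂ) * (E6 τ)^3 * (E6 τ)⁻¹ * (Kf τ z)^3 + (1/995328 : ℂ) * (E6 τ)^4 * (E6 τ)⁻¹^2 * (Kf τ z)^3 + (-1/2985984 : ℂ) * (E6 τ)^4 * (E4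 τ)⁻¹^3 * (Kf τ z)^3 + (-1/2985984 : ℂ) * (E6 τ)^5 * (E4 τ)⁻¹^3 * (E6 τ)⁻¹ * (Kf τ z)^3 + (-1/2985984 : ℂ) * (E6 τ)^6 * (E4 τ)⁻¹^3 * (E6 τ)⁻¹^2 * (Kf τ z)^3 + (1/6912 : ℂ) * (E4 τ)^2 * (Kf τ z) * (Mf τ z) + (-1/2985984 : ℂ) * (E4 τ)^3 * (Kf τ z)^3 + (-1/2985984 : ℂ) * (E4 τ)^3 * (E6 τ) * (E6 τ)⁻¹ * (Kf τ z)^3 + (-1/995328 : ℂ) * (E4 τ)^3 * (E6 τ)^2 * (E6 τ)⁻¹^2 * (Kf τ z)^3 + (1/2985984 : ℂ) * (E4 τ)^6 * (E6 τ)⁻¹^2 * (Kf τ z)^3) * hB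
  rw [e1', e2', e4', e5', e6', e3']
  rfl
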